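/- The map ε ↦ z*(ε) is componentwise non-decreasing and right-continuous on [0,1). Consequently, its derivative (z*)'(ε) exists for Lebesgue-almost every ε, and z*(ε) − z* ≥ ∫₀^ε (z*)'(ξ) dξ componentwise for every ε ∈ [0,1). -/

import Mathlib

open MeasureTheory Filter Set Topology

open Classical in
/-- Probability that a Poisson(q) random variable equals `k`. -/
noncomputable def poisProb (q : ℝ) (k : ℕ) : ℝ := Real.exp (-q) * q ^ k / (Nat.factorial k : ℝ)

open Classical in
/-- `psiMulti q l = P(∑_{s=1}^R s · Q_s ≥ l)` for independent `Q_s ~ Poi(q s)`;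
in particular it equals `1` for `l ≤ 0` and `0` for `l = ∞`. -/
noncomputable def psiMulti {R : ℕ} (q : Fin R → ℝ) (l : WithTop ℤ) : ℝ :=
  ∑' k : Fin R → ℕ,
    if l ≤ ((((∑ s : Fin R, ((s : ℕ) + 1) * k s) : ℕ) : ℤ) : WithTop ℤ) then
      ∏ s, poisProb (q s) (k s)
    else 0

/-- Embedding of `ℕ ∪ {∞}` into `ℤ ∪ {∞}`. -/
noncomputable def natCastTop (c : WithTop ℕ) : WithTop ℤ := WithTop.map (fun n : ℕ => (n : ℤ)) c

/-- The function `f^{r,α,β}(z) = E[W^{+,r,α} ψ(∑_γ W^{-,1,γ} z^{1,β,γ}, …, ∑_γ W^{-,R,γ} z^{R,β,γ}; C)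
1{A=β}] − z^{r,α,β}` (with `v = (r,α,β)`). -/
noncomputable def fV {Ω : Type*} [MeasureSpace Ω] {R T : ℕ}
    (Wm Wp : Ω → Fin R → Fin T → ℝ) (C : Ω → WithTop ℕ) (A : Ω → Fin T)
    (v : Fin R × Fin T × Fin T) (z : Fin R × Fin T × Fin T → ℝ) : ℝ :=
  (∫ ω, if A ω = v.2.2 then
      Wp ω v.1 v.2.1 *
        psiMulti (fun s => ∑ γ, Wm ω s γ * z (s, v.2.2, γ)) (natCastTop (C ω))
    else 0) - z v

/-- The function `g(z) = ∑_β E[S ψ(…; C) 1{A=β}]`. -/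
noncomputable def gV {Ω : Type*} [MeasureSpace Ω] {R T : ℕ}
    (Wm : Ω → Fin R → Fin T → ℝ) (S : Ω → ℝ) (C : Ω → WithTop ℕ) (A : Ω → Fin T)
    (z : Fin R × Fin T × Fin T → ℝ) : ℝ :=
  ∑ β, ∫ ω, if A ω = β then
      S ω * psiMulti (fun s => ∑ γ, Wm ω s γ * z (s, β, γ)) (natCastTop (C ω))
    else 0

/-- The nonnegative orthant `[0,∞)^V`. -/
def nonnegV (R T : ℕ) : Set ((Fin R × Fin T × Fin T) → ℝ) := {z | ∀ v, 0 ≤ z v}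

/-- The set `P = ∩_{(r,α,β) ∈ V} {z ∈ [0,∞)^V : f^{r,α,β}(z) ≥ 0}`. -/
noncomputable def PsetV {Ω : Type*} [MeasureSpace Ω] {R T : ℕ}
    (Wm Wp : Ω → Fin R → Fin T → ℝ) (C : Ω → WithTop ℕ) (A : Ω → Fin T) :
    Set ((Fin R × Fin T × Fin T) → ℝ) :=
  {z | z ∈ nonnegV R T ∧ ∀ v, 0 ≤ fV Wm Wp C A v z}

/-- `P₀`, the largest connected subset of `P` containing `0`. -/
noncomputable def P0V {Ω : Type*} [MeasureSpace Ω] {R T : ℕ}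
    (Wm Wp : Ω → Fin R → Fin T → ℝ) (C : Ω → WithTop ℕ) (A : Ω → Fin T) :
    Set ((Fin R × Fin T × Fin T) → ℝ) :=
  connectedComponentIn (PsetV Wm Wp C A) 0

/-- `z*`, defined by `(z*)^{r,α,β} = sup_{z ∈ P₀} z^{r,α,β}`. -/
noncomputable def zStarV {Ω : Type*} [MeasureSpace Ω] {R T : ℕ}
    (Wm Wp : Ω → Fin R → Fin T → ℝ) (C : Ω → WithTop ℕ) (A : Ω → Fin T) :
    (Fin R × Fin T × Fin T) → ℝ :=
  fun v => sSup ((fun z => z v) '' P0V Wm Wp C A)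

/-- `ζ^{r,α,β} = E[W^{+,r,α} 1{A=β}]`. -/
noncomputable def zetaV {Ω : Type*} [MeasureSpace Ω] {R T : ℕ}
    (Wp : Ω → Fin R → Fin T → ℝ) (A : Ω → Fin T) (v : Fin R × Fin T × Fin T) : ℝ :=
  ∫ ω, if A ω = v.2.2 then Wp ω v.1 v.2.1 else 0

/-- The shocked function `f_ε^{r,α,β}(z) = (1-ε) f^{r,α,β}(z) + ε (ζ^{r,α,β} - z^{r,α,β})`. -/
noncomputable def fVeps {Ω : Type*} [MeasureSpace Ω] {R T : ℕ}
    (Wm Wp : Ω → Fin R → Fin T → ℝ) (C : Ω → WithTop ℕ) (A : Ω → Fin T) (ε : ℝ)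
    (v : Fin R × Fin T × Fin T) (z : Fin R × Fin T × Fin T → ℝ) : ℝ :=
  (1 - ε) * fV Wm Wp C A v z + ε * (zetaV Wp A v - z v)

/-- `P(ε) = ∩_{(r,α,β) ∈ V} {z ∈ [0,∞)^V : f_ε^{r,α,β}(z) ≥ 0}`. -/
noncomputable def PsetVeps {Ω : Type*} [MeasureSpace Ω] {R T : ℕ}
    (Wm Wp : Ω → Fin R → Fin T → ℝ) (C : Ω → WithTop ℕ) (A : Ω → Fin T) (ε : ℝ) :
    Set ((Fin R × Fin T × Fin T) → ℝ) :=
  {z | z ∈ nonnegV R T ∧ ∀ v, 0 ≤ fVeps Wm Wp C A ε v z}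

/-- `P₀(ε)`, the largest connected subset of `P(ε)` containing `0`. -/
noncomputable def P0Veps {Ω : Type*} [MeasureSpace Ω] {R T : ℕ}
    (Wm Wp : Ω → Fin R → Fin T → ℝ) (C : Ω → WithTop ℕ) (A : Ω → Fin T) (ε : ℝ) :
    Set ((Fin R × Fin T × Fin T) → ℝ) :=
  connectedComponentIn (PsetVeps Wm Wp C A ε) 0

/-- `z*(ε)`, defined by `(z*(ε))^{r,α,β} = sup_{z ∈ P₀(ε)} z^{r,α,β}`. -/
noncomputable def zStarVeps {Ω : Type*} [MeasureSpace Ω] {R T : ℕ}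
    (Wm Wp : Ω → Fin R → Fin T → ℝ) (C : Ω → WithTop ℕ) (A : Ω → Fin T) (ε : ℝ) :
    (Fin R × Fin T × Fin T) → ℝ :=
  fun v => sSup ((fun z => z v) '' P0Veps Wm Wp C A ε)

/-!
Because `E[W⁺ ψ 1{A=β}] ≤ ζ` on the orthant, `f_ε = f + ε (ζ − E[W⁺ ψ 1{A=β}])` is nondecreasing
in `ε`, so the sets `P(ε)` and their components `P₀(ε)` increase with `ε`; they are compact, being
closed and contained in the box `[0, ζ]`. Hence `z*` is monotone. Since `f_δ` is affine in `δ`,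
`⋂_{δ > ε} P(δ) ⊆ P(ε)`; a directed intersection of compact connected sets is connected, so
`⋂_{δ > ε} P₀(δ) ⊆ P₀(ε)`, and compactness turns this into right-continuity of the suprema.
The last two claims are Lebesgue's theorem for monotone functions: they are differentiable
almost everywhere and `∫ₐᵇ f' ≤ f b − f a`.
-/

section ConnectedIntersection

variable {X : Type*} [TopologicalSpace X]

theorem IsClosed.connectedComponentIn {F : Set X} (hF : IsClosed F) (x : X) :
    IsClosed (connectedComponentIn F x) := by
  by_cases hx : x ∈ F
  · exact isClosed_of_closure_subset <|
      isPreconnected_connectedComponentIn.closure.subset_connectedComponentIn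
        (subset_closure (mem_connectedComponentIn hx))
        (closure_minimal (connectedComponentIn_subset F x) hF)
  · simp [connectedComponentIn_eq_empty hx]

variable [T2Space X] {ι : Type*} [Nonempty ι]

theorem IsPreconnected.iInter_of_directed {K : ι → Set X} (hdir : Directed (· ⊇ ·) K)
    (hcpt : ∀ i, IsCompact (K i)) (hconn : ∀ i, IsPreconnected (K i)) :
    IsPreconnected (⋂ i, K i) := by
  have hcptI : IsCompact (⋂ i, K i) :=
    (hcpt (Classical.arbitrary ι)).of_isClosed_subset (isClosed_iInter fun i => (hcpt i).isClosed)
      (Set.iInter_subset K _)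
  rw [isPreconnected_closed_iff]
  intro t t' ht ht' hcover ⟨x, hxK, hxt⟩ ⟨y, hyK, hyt'⟩
  by_contra hdisj
  -- Separate the two halves of `⋂ i, K i` by disjoint open sets; by compactness some `K i`
  -- already lies in their union, which its connectedness forbids.
  obtain ⟨U, V, hU, hV, htU, htV, hUV⟩ :=
    SeparatedNhds.of_isCompact_isCompact (hcptI.inter_right ht) (hcptI.inter_right ht') <| by
      rw [Set.disjoint_left]
      exact fun z hz hz' => hdisj ⟨z, hz.1, hz.2, hz'.2⟩
  obtain ⟨i, hi⟩ := exists_subset_nhds_of_isCompact hdir hcpt (U := U ∪ V) fun z hz =>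
    (hU.union hV).mem_nhds <| (hcover hz).imp (fun h => htU ⟨hz, h⟩) (fun h => htV ⟨hz, h⟩)
  obtain ⟨z, -, hzU, hzV⟩ := hconn i U V hU hV hi
    ⟨x, Set.iInter_subset K i hxK, htU ⟨hxK, hxt⟩⟩ ⟨y, Set.iInter_subset K i hyK, htV ⟨hyK, hyt'⟩⟩
  exact Set.disjoint_left.1 hUV hzU hzV

theorem iInter_connectedComponentIn_subset {F : ι → Set X} {x : X} (hdir : Directed (· ⊇ ·) F)
    (hx : ∀ i, x ∈ F i) (hcpt : ∀ i, IsCompact (connectedComponentIn (F i) x)) :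
    ⋂ i, connectedComponentIn (F i) x ⊆ connectedComponentIn (⋂ i, F i) x :=
  (IsPreconnected.iInter_of_directed
      (hdir.mono_comp _ fun _ _ h => connectedComponentIn_mono x h) hcpt
      fun _ => isPreconnected_connectedComponentIn).subset_connectedComponentIn
    (Set.mem_iInter.2 fun i => mem_connectedComponentIn (hx i))
    (Set.iInter_mono fun i => connectedComponentIn_subset (F i) x)

end ConnectedIntersection

section SupOverCompacts

variable {X : Type*} [TopologicalSpace X] {g : X → ℝ}

theorem monotoneOn_sSup_image {K : ℝ → Set X} {s : Set ℝ} (hmono : MonotoneOn K s)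
    (hcpt : ∀ δ ∈ s, IsCompact (K δ)) (hne : ∀ δ ∈ s, (K δ).Nonempty) (hg : Continuous g) :
    MonotoneOn (fun δ => sSup (g '' K δ)) s := fun _ ha _ hb hab =>
  csSup_le_csSup ((hcpt _ hb).image hg).bddAbove ((hne _ ha).image g)
    (Set.image_mono (hmono ha hb hab))

variable [T2Space X]

theorem continuousWithinAt_sSup_image {K : ℝ → Set X} {a b : ℝ} (hab : a < b)
    (hmono : MonotoneOn K (Ico a b)) (hcpt : ∀ δ ∈ Ico a b, IsCompact (K δ))
    (hne : ∀ δ ∈ Ico a b, (K δ).Nonempty) (hg : Continuous g)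
    (hK : ⋂ δ : Ioo a b, K δ ⊆ K a) :
    ContinuousWithinAt (fun δ => sSup (g '' K δ)) (Ici a) a := by
  have ha : a ∈ Ico a b := ⟨le_rfl, hab⟩
  have hsup := monotoneOn_sSup_image hmono hcpt hne hg
  have hIco : ∀ᶠ δ in 𝓝[≥] a, δ ∈ Ico a b := Ico_mem_nhdsGE hab
  refine tendsto_order.2 ⟨fun c hc => ?_, fun c hc => ?_⟩
  · filter_upwards [hIco] with δ hδ
    exact hc.trans_le (hsup ha hδ hδ.1)
  · have : Nonempty (Ioo a b) := ⟨⟨(a + b) / 2, by constructor <;> linarith⟩⟩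
    -- By compactness, the open set `{g < c}` ⊇ `⋂_{δ > a} K δ` already contains some `K δ`.
    obtain ⟨⟨δ, hδ⟩, hδc⟩ := exists_subset_nhds_of_isCompact (U := {x | g x < c})
      (monotoneOn_iff_monotone.1 (hmono.mono Ioo_subset_Ico_self)).directed_ge
      (fun δ => hcpt δ (Ioo_subset_Ico_self δ.2))
      (fun x hx => (isOpen_lt hg continuous_const).mem_nhds
        ((le_csSup ((hcpt a ha).image hg).bddAbove ⟨x, hK hx, rfl⟩).trans_lt hc))
    have hδ' : δ ∈ Ico a b := Ioo_subset_Ico_self hδ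
    obtain ⟨x, hxK, hx⟩ := ((hcpt δ hδ').image hg).sSup_mem ((hne δ hδ').image g)
    filter_upwards [Ico_mem_nhdsGE hδ.1] with ε hε
    exact (hsup ⟨hε.1, hε.2.trans hδ.2⟩ hδ' hε.2.le).trans_lt (hx.symm.trans_lt (hδc hxK))

end SupOverCompacts

theorem MonotoneOn.intervalIntegral_derivWithin_le {f : ℝ → ℝ} {s : Set ℝ} {a b : ℝ}
    (hf : MonotoneOn f s) (hab : a ≤ b) (hs : Icc a b ⊆ s) :
    ∫ x in a..b, derivWithin f s x ≤ f b - f a := by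
  have hderiv : ∫ x in a..b, derivWithin f s x = ∫ x in a..b, deriv f x := by
    refine intervalIntegral.integral_congr_ae ?_
    filter_upwards [volume.ae_ne b] with x hxb hx
    rw [uIoc_of_le hab] at hx
    exact derivWithin_of_mem_nhds
      (Filter.mem_of_superset (Icc_mem_nhds hx.1 (lt_of_le_of_ne hx.2 hxb)) hs)
  have hfab : MonotoneOn f (uIcc a b) := hf.mono (uIcc_of_le hab ▸ hs)
  rw [hderiv]
  exact (uIcc_of_le (sub_nonneg.2 (hfab left_mem_uIcc right_mem_uIcc hab)) ▸
    hfab.intervalIntegral_deriv_mem_uIcc).2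

section ProductSeries

variable {𝕜 β : Type*} [NormedField 𝕜]

theorem summable_norm_fin_pi_prod {n : ℕ} (g : Fin n → β → 𝕜)
    (hg : ∀ s, Summable fun k => ‖g s k‖) :
    Summable fun k : Fin n → β => ‖∏ s, g s (k s)‖ := by
  induction n with
  | zero => exact .of_finite
  | succ n ih =>
    rw [← (Fin.consEquiv fun _ => β).summable_iff]
    refine ((hg 0).mul_norm (ih _ fun s => hg s.succ)).congr fun k => ?_
    simp [Fin.consEquiv, Fin.prod_univ_succ]

theorem tsum_fin_pi_prod [CompleteSpace 𝕜] {n : ℕ} (g : Fin n → β → 𝕜)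
    (hg : ∀ s, Summable fun k => ‖g s k‖) :
    ∑' k : Fin n → β, ∏ s, g s (k s) = ∏ s, ∑' k, g s k := by
  induction n with
  | zero => simp
  | succ n ih =>
    rw [← (Fin.consEquiv fun _ => β).tsum_eq, Fin.prod_univ_succ, ← ih _ fun s => hg s.succ,
      tsum_mul_tsum_of_summable_norm (hg 0) (summable_norm_fin_pi_prod _ fun s => hg s.succ)]
    simp [Fin.consEquiv, Fin.prod_univ_succ]

end ProductSeries

section Poisson

theorem poisProb_nonneg {q : ℝ} (hq : 0 ≤ q) (k : ℕ) : 0 ≤ poisProb q k := by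
  unfold poisProb; positivity

theorem continuous_poisProb (k : ℕ) : Continuous fun q => poisProb q k := by
  unfold poisProb; fun_prop

theorem hasSum_poisProb (q : ℝ) : HasSum (poisProb q) 1 := by
  have h := (NormedSpace.expSeries_div_hasSum_exp q).mul_left (Real.exp (-q))
  rw [← Real.exp_eq_exp_ℝ, ← Real.exp_add, neg_add_cancel, Real.exp_zero] at h
  refine (funext fun k => ?_ : poisProb q = _) ▸ h
  rw [poisProb, mul_div_assoc]

variable {R : ℕ} (q : Fin R → ℝ)

theorem summable_norm_prod_poisProb :
    Summable fun k : Fin R → ℕ => ‖∏ s, poisProb (q s) (k s)‖ :=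
  summable_norm_fin_pi_prod _ fun s => (hasSum_poisProb (q s)).summable.norm

theorem tsum_prod_poisProb : ∑' k : Fin R → ℕ, ∏ s, poisProb (q s) (k s) = 1 := by
  simp [tsum_fin_pi_prod _ fun s => (hasSum_poisProb (q s)).summable.norm,
    (hasSum_poisProb _).tsum_eq]

end Poisson

section Psi

variable {R : ℕ} (q : Fin R → ℝ)

theorem psiMulti_nonneg (hq : ∀ s, 0 ≤ q s) (l : WithTop ℤ) : 0 ≤ psiMulti q l :=
  tsum_nonneg fun k => by
    split
    · exact Finset.prod_nonneg fun s _ => poisProb_nonneg (hq s) _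
    · exact le_rfl

theorem psiMulti_le_one (hq : ∀ s, 0 ≤ q s) (l : WithTop ℤ) : psiMulti q l ≤ 1 := by
  rw [← tsum_prod_poisProb q]
  refine Summable.tsum_le_tsum (fun k => ?_) ?_ (summable_norm_prod_poisProb q).of_norm
  · split
    · exact le_rfl
    · exact Finset.prod_nonneg fun s _ => poisProb_nonneg (hq s) _
  · refine (summable_norm_prod_poisProb q).of_norm_bounded fun k => ?_
    split
    · exact le_rfl
    · simpa using (norm_nonneg _ : 0 ≤ ‖∏ s, poisProb (q s) (k s)‖)

theorem psiMulti_top : psiMulti q ⊤ = 0 := by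
  simp only [psiMulti, top_le_iff, WithTop.coe_ne_top, if_false, tsum_zero]

-- Only finitely many `k` fall below a finite threshold; this is what makes `ψ` continuous in `q`.
theorem psiMulti_coe (m : ℤ) :
    psiMulti q m = 1 - ∑ k ∈ Fintype.piFinset fun _ => Finset.range m.toNat,
      if ((∑ s : Fin R, ((s : ℕ) + 1) * k s : ℕ) : ℤ) < m then
        ∏ s, poisProb (q s) (k s) else 0 := by
  have hsupp : ∀ k ∉ Fintype.piFinset fun _ : Fin R => Finset.range m.toNat,
      (if ((∑ s : Fin R, ((s : ℕ) + 1) * k s : ℕ) : ℤ) < m then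
        ∏ s, poisProb (q s) (k s) else 0) = 0 := by
    intro k hk
    obtain ⟨s, hs⟩ : ∃ s, m.toNat ≤ k s := by simpa using hk
    have hks : k s ≤ ∑ s : Fin R, ((s : ℕ) + 1) * k s :=
      (Nat.le_mul_of_pos_left _ s.succ_pos).trans
        (Finset.single_le_sum (f := fun s : Fin R => ((s : ℕ) + 1) * k s)
          (fun _ _ => Nat.zero_le _) (Finset.mem_univ s))
    rw [if_neg (not_lt.2 ((Int.self_le_toNat m).trans (by exact_mod_cast hs.trans hks)))]
  have hsum := (summable_norm_prod_poisProb q).of_norm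
  rw [← tsum_prod_poisProb q, ← tsum_eq_sum (L := .unconditional _) hsupp,
    ← hsum.tsum_sub (summable_of_ne_finset_zero hsupp), psiMulti]
  congr 1
  funext k
  by_cases h : ((∑ s : Fin R, ((s : ℕ) + 1) * k s : ℕ) : ℤ) < m
  · rw [if_pos h, if_neg (by exact_mod_cast h.not_ge), sub_self]
  · rw [if_neg h, if_pos (by exact_mod_cast not_lt.1 h), sub_zero]

theorem continuous_psiMulti (l : WithTop ℤ) : Continuous fun q : Fin R → ℝ => psiMulti q l := by
  induction l with
  | top => simpa [psiMulti_top] using continuous_const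
  | coe m =>
    simp only [psiMulti_coe]
    refine continuous_const.sub (continuous_finsetSum _ fun k _ => ?_)
    split
    · exact continuous_finsetProd _ fun s _ => (continuous_poisProb (k s)).comp (continuous_apply s)
    · exact continuous_const

end Psi

section Model

variable {Ω : Type*} {R T : ℕ} {Wm Wp : Ω → Fin R → Fin T → ℝ}
  {C : Ω → WithTop ℕ} {A : Ω → Fin T}

theorem isClosed_nonnegV : IsClosed (nonnegV R T) :=
  isClosed_Ici (a := (0 : Fin R × Fin T × Fin T → ℝ))

noncomputable def fVIntegrand (Wm Wp : Ω → Fin R → Fin T → ℝ) (C : Ω → WithTop ℕ)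
    (A : Ω → Fin T) (v : Fin R × Fin T × Fin T) (z : Fin R × Fin T × Fin T → ℝ) (ω : Ω) : ℝ :=
  if A ω = v.2.2 then
    Wp ω v.1 v.2.1 * psiMulti (fun s => ∑ γ, Wm ω s γ * z (s, v.2.2, γ)) (natCastTop (C ω))
  else 0

variable (hWm_nonneg : ∀ ω r α, 0 ≤ Wm ω r α) (hWp_nonneg : ∀ ω r α, 0 ≤ Wp ω r α)

include hWm_nonneg hWp_nonneg in
theorem fVIntegrand_mem_Icc (v : Fin R × Fin T × Fin T) {z : Fin R × Fin T × Fin T → ℝ}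
    (hz : z ∈ nonnegV R T) (ω : Ω) :
    fVIntegrand Wm Wp C A v z ω ∈ Icc 0 (if A ω = v.2.2 then Wp ω v.1 v.2.1 else 0) := by
  have hq : ∀ s, 0 ≤ ∑ γ, Wm ω s γ * z (s, v.2.2, γ) := fun s =>
    Finset.sum_nonneg fun γ _ => mul_nonneg (hWm_nonneg _ _ _) (hz _)
  unfold fVIntegrand
  split
  · exact ⟨mul_nonneg (hWp_nonneg _ _ _) (psiMulti_nonneg _ hq _),
      mul_le_of_le_one_right (hWp_nonneg _ _ _) (psiMulti_le_one _ hq _)⟩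
  · exact ⟨le_rfl, le_rfl⟩

variable [MeasureSpace Ω] (hWm_meas : ∀ r α, Measurable fun ω => Wm ω r α)
  (hWp_meas : ∀ r α, Measurable fun ω => Wp ω r α)
  (hA_meas : Measurable A) (hC_meas : ∀ l : WithTop ℕ, MeasurableSet {ω | C ω = l})
  (hWp_int : ∀ r α, Integrable fun ω => Wp ω r α)

theorem fVeps_eq (ε : ℝ) (v : Fin R × Fin T × Fin T) (z : Fin R × Fin T × Fin T → ℝ) :
    fVeps Wm Wp C A ε v z =
      (1 - ε) * (∫ ω, fVIntegrand Wm Wp C A v z ω) + ε * zetaV Wp A v - z v := by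
  change (1 - ε) * ((∫ ω, fVIntegrand Wm Wp C A v z ω) - z v) + ε * (zetaV Wp A v - z v) = _
  ring

include hWm_meas hWp_meas hA_meas hC_meas in
theorem measurable_fVIntegrand (v : Fin R × Fin T × Fin T) (z : Fin R × Fin T × Fin T → ℝ) :
    Measurable (fVIntegrand Wm Wp C A v z) := by
  have hq : Measurable fun ω s => ∑ γ, Wm ω s γ * z (s, v.2.2, γ) :=
    measurable_pi_lambda _ fun s => Finset.measurable_sum _ fun γ _ => (hWm_meas s γ).mul_const _
  have hpsi : Measurable fun p : (Fin R → ℝ) × WithTop ℕ => psiMulti p.1 (natCastTop p.2) :=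
    measurable_from_prod_countable_left fun l => (continuous_psiMulti (natCastTop l)).measurable
  exact Measurable.ite (hA_meas (measurableSet_singleton _))
    ((hWp_meas _ _).mul (hpsi.comp (hq.prodMk (measurable_to_countable' hC_meas))))
    measurable_const

include hWp_int hA_meas in
theorem integrable_zetaV_integrand (v : Fin R × Fin T × Fin T) :
    Integrable fun ω => if A ω = v.2.2 then Wp ω v.1 v.2.1 else 0 := by
  refine ((hWp_int v.1 v.2.1).indicator (hA_meas (measurableSet_singleton v.2.2))).congr
    (ae_of_all _ fun ω => ?_)
  by_cases h : A ω = v.2.2 <;> simp [h]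

include hWm_nonneg hWp_nonneg hWp_int hA_meas in
theorem integral_fVIntegrand_le_zetaV (v : Fin R × Fin T × Fin T)
    {z : Fin R × Fin T × Fin T → ℝ} (hz : z ∈ nonnegV R T) :
    ∫ ω, fVIntegrand Wm Wp C A v z ω ≤ zetaV Wp A v :=
  integral_mono_of_nonneg
    (ae_of_all _ fun ω => (fVIntegrand_mem_Icc hWm_nonneg hWp_nonneg v hz ω).1)
    (integrable_zetaV_integrand hA_meas hWp_int v)
    (ae_of_all _ fun ω => (fVIntegrand_mem_Icc hWm_nonneg hWp_nonneg v hz ω).2)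

include hWm_nonneg hWp_nonneg hWm_meas hWp_meas hA_meas hC_meas hWp_int in
theorem continuousOn_integral_fVIntegrand (v : Fin R × Fin T × Fin T) :
    ContinuousOn (fun z => ∫ ω, fVIntegrand Wm Wp C A v z ω) (nonnegV R T) := by
  refine continuousOn_of_dominated
    (fun z _ => (measurable_fVIntegrand hWm_meas hWp_meas hA_meas hC_meas v z).aestronglyMeasurable)
    (fun z hz => ae_of_all _ fun ω => ?_) (integrable_zetaV_integrand hA_meas hWp_int v)
    (ae_of_all _ fun ω => Continuous.continuousOn ?_)
  · obtain ⟨h0, h1⟩ := fVIntegrand_mem_Icc hWm_nonneg hWp_nonneg v hz ω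
    rwa [Real.norm_of_nonneg h0]
  · unfold fVIntegrand
    split
    · exact continuous_const.mul ((continuous_psiMulti _).comp (by fun_prop))
    · exact continuous_const

include hWm_nonneg hWp_nonneg hWp_int hA_meas

theorem PsetVeps_subset_Icc {ε : ℝ} (hε1 : ε ≤ 1) :
    PsetVeps Wm Wp C A ε ⊆ Icc 0 (zetaV Wp A) := fun z ⟨hz, hf⟩ => by
  refine ⟨hz, fun v => ?_⟩
  have hI := integral_fVIntegrand_le_zetaV hWm_nonneg hWp_nonneg hA_meas hWp_int (C := C) v hz
  have hfv := hf v
  rw [fVeps_eq] at hfv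
  nlinarith

theorem PsetVeps_mono {ε₁ ε₂ : ℝ} (h : ε₁ ≤ ε₂) :
    PsetVeps Wm Wp C A ε₁ ⊆ PsetVeps Wm Wp C A ε₂ := fun z ⟨hz, hf⟩ => by
  refine ⟨hz, fun v => ?_⟩
  have hI := integral_fVIntegrand_le_zetaV hWm_nonneg hWp_nonneg hA_meas hWp_int (C := C) v hz
  have hfv := hf v
  rw [fVeps_eq] at hfv ⊢
  nlinarith

theorem zero_mem_PsetVeps {ε : ℝ} (hε0 : 0 ≤ ε) :
    (0 : Fin R × Fin T × Fin T → ℝ) ∈ PsetVeps Wm Wp C A ε := by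
  have h0 : (0 : Fin R × Fin T × Fin T → ℝ) ∈ nonnegV R T := fun _ => le_rfl
  refine ⟨h0, fun v => ?_⟩
  have hI := integral_fVIntegrand_le_zetaV hWm_nonneg hWp_nonneg hA_meas hWp_int (C := C) v h0
  have hI0 : 0 ≤ ∫ ω, fVIntegrand Wm Wp C A v 0 ω :=
    integral_nonneg fun ω => (fVIntegrand_mem_Icc hWm_nonneg hWp_nonneg v h0 ω).1
  rw [fVeps_eq]
  simp only [Pi.zero_apply, sub_zero]
  nlinarith

include hWm_meas hWp_meas hC_meas in
theorem isClosed_PsetVeps (ε : ℝ) : IsClosed (PsetVeps Wm Wp C A ε) := by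
  have hP : PsetVeps Wm Wp C A ε =
      nonnegV R T ∩ ⋂ v, nonnegV R T ∩ (fun z => fVeps Wm Wp C A ε v z) ⁻¹' Ici 0 := by
    ext z
    simp only [PsetVeps, Set.mem_ofPred_eq, Set.mem_inter_iff, Set.mem_iInter, Set.mem_preimage,
      Set.mem_Ici]
    exact ⟨fun ⟨hz, hf⟩ => ⟨hz, fun v => ⟨hz, hf v⟩⟩, fun ⟨hz, hf⟩ => ⟨hz, fun v => (hf v).2⟩⟩
  rw [hP]
  refine isClosed_nonnegV.inter (isClosed_iInter fun v => ?_)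
  refine ContinuousOn.preimage_isClosed_of_isClosed ?_ isClosed_nonnegV isClosed_Ici
  simp_rw [fVeps_eq]
  exact (((continuousOn_integral_fVIntegrand hWm_nonneg hWp_nonneg hWm_meas hWp_meas hA_meas
    hC_meas hWp_int v).const_smul (1 - ε)).add continuousOn_const).sub
    (continuous_apply v).continuousOn

omit hWm_nonneg hWp_nonneg hWp_int hA_meas in
theorem iInter_PsetVeps_subset {ε : ℝ} (hε : ε < 1) :
    ⋂ δ : Ioo ε 1, PsetVeps Wm Wp C A δ ⊆ PsetVeps Wm Wp C A ε := fun z hz => by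
  have hzδ : ∀ δ ∈ Ioo ε 1, z ∈ PsetVeps Wm Wp C A δ := fun δ hδ => Set.mem_iInter.1 hz ⟨δ, hδ⟩
  refine ⟨(hzδ _ (exists_between hε).choose_spec).1, fun v => ?_⟩
  have hcont : Continuous fun δ => fVeps Wm Wp C A δ v z := by
    unfold fVeps; fun_prop
  refine ge_of_tendsto ((hcont.tendsto ε).mono_left (nhdsWithin_le_nhds (s := Ioi ε))) ?_
  filter_upwards [Ioo_mem_nhdsGT hε] with δ hδ
  exact (hzδ δ hδ).2 v

theorem zero_mem_P0Veps {ε : ℝ} (hε0 : 0 ≤ ε) :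
    (0 : Fin R × Fin T × Fin T → ℝ) ∈ P0Veps Wm Wp C A ε :=
  mem_connectedComponentIn (zero_mem_PsetVeps hWm_nonneg hWp_nonneg hA_meas hWp_int hε0)

theorem P0Veps_mono {ε₁ ε₂ : ℝ} (h : ε₁ ≤ ε₂) :
    P0Veps Wm Wp C A ε₁ ⊆ P0Veps Wm Wp C A ε₂ :=
  connectedComponentIn_mono _ (PsetVeps_mono hWm_nonneg hWp_nonneg hA_meas hWp_int h)

include hWm_meas hWp_meas hC_meas

theorem isCompact_P0Veps {ε : ℝ} (hε1 : ε ≤ 1) : IsCompact (P0Veps Wm Wp C A ε) :=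
  isCompact_Icc.of_isClosed_subset
    ((isClosed_PsetVeps hWm_nonneg hWp_nonneg hWm_meas hWp_meas hA_meas hC_meas hWp_int
      ε).connectedComponentIn 0)
    ((connectedComponentIn_subset _ _).trans
      (PsetVeps_subset_Icc hWm_nonneg hWp_nonneg hA_meas hWp_int hε1))

theorem iInter_P0Veps_subset {ε : ℝ} (hε0 : 0 ≤ ε) (hε : ε < 1) :
    ⋂ δ : Ioo ε 1, P0Veps Wm Wp C A δ ⊆ P0Veps Wm Wp C A ε := by
  have : Nonempty (Ioo ε 1) := (nonempty_Ioo.2 hε).to_subtype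
  refine (iInter_connectedComponentIn_subset (F := fun δ : Ioo ε 1 => PsetVeps Wm Wp C A δ)
    (Monotone.directed_ge fun δ₁ δ₂ h => PsetVeps_mono hWm_nonneg hWp_nonneg hA_meas hWp_int h)
    (fun δ => zero_mem_PsetVeps hWm_nonneg hWp_nonneg hA_meas hWp_int (hε0.trans δ.2.1.le))
    (fun δ => isCompact_P0Veps hWm_nonneg hWp_nonneg hWm_meas hWp_meas hA_meas hC_meas hWp_int
      δ.2.2.le)).trans ?_
  exact connectedComponentIn_mono _ (iInter_PsetVeps_subset hε)

end Model

theorem stmt_7_general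
    {Ω : Type*} [MeasureSpace Ω]
    {R T : ℕ}
    (Wm Wp : Ω → Fin R → Fin T → ℝ) (C : Ω → WithTop ℕ) (A : Ω → Fin T)
    (hWm_nonneg : ∀ ω r α, 0 ≤ Wm ω r α) (hWp_nonneg : ∀ ω r α, 0 ≤ Wp ω r α)
    (hWm_meas : ∀ r α, Measurable fun ω => Wm ω r α)
    (hWp_meas : ∀ r α, Measurable fun ω => Wp ω r α)
    (hA_meas : Measurable A)
    (hC_meas : ∀ l : WithTop ℕ, MeasurableSet {ω | C ω = l})
    (hWp_int : ∀ r α, Integrable fun ω => Wp ω r α) :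
    (∀ ε₁ ∈ Set.Ico (0:ℝ) 1, ∀ ε₂ ∈ Set.Ico (0:ℝ) 1, ε₁ ≤ ε₂ →
      ∀ v, zStarVeps Wm Wp C A ε₁ v ≤ zStarVeps Wm Wp C A ε₂ v) ∧
    (∀ ε ∈ Set.Ico (0:ℝ) 1, ∀ v,
      ContinuousWithinAt (fun δ => zStarVeps Wm Wp C A δ v) (Set.Ici ε) ε) ∧
    (∀ᵐ ε ∂((volume : Measure ℝ).restrict (Set.Ico (0:ℝ) 1)), ∀ v,
      DifferentiableWithinAt ℝ (fun δ => zStarVeps Wm Wp C A δ v) (Set.Ico (0:ℝ) 1) ε) ∧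
    (∀ ε ∈ Set.Ico (0:ℝ) 1, ∀ v,
      ∫ ξ in (0:ℝ)..ε, derivWithin (fun δ => zStarVeps Wm Wp C A δ v) (Set.Ico (0:ℝ) 1) ξ ≤
        zStarVeps Wm Wp C A ε v - zStarVeps Wm Wp C A 0 v) := by
  have hmono : MonotoneOn (P0Veps Wm Wp C A) (Ici 0) := fun _ _ _ _ h =>
    P0Veps_mono hWm_nonneg hWp_nonneg hA_meas hWp_int h
  have hcpt : ∀ δ ∈ Ico (0 : ℝ) 1, IsCompact (P0Veps Wm Wp C A δ) := fun _ hδ =>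
    isCompact_P0Veps hWm_nonneg hWp_nonneg hWm_meas hWp_meas hA_meas hC_meas hWp_int hδ.2.le
  have hne : ∀ δ ∈ Ici (0 : ℝ), (P0Veps Wm Wp C A δ).Nonempty := fun _ hδ =>
    ⟨0, zero_mem_P0Veps hWm_nonneg hWp_nonneg hA_meas hWp_int hδ⟩
  have hzStar : ∀ v, MonotoneOn (fun δ => zStarVeps Wm Wp C A δ v) (Ico 0 1) := fun v =>
    monotoneOn_sSup_image (hmono.mono Ico_subset_Ici_self) hcpt
      (fun δ hδ => hne δ hδ.1) (continuous_apply v)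
  refine ⟨fun ε₁ h₁ ε₂ h₂ h v => hzStar v h₁ h₂ h, fun ε hε v => ?_,
    ae_all_iff.2 fun v => (hzStar v).ae_differentiableWithinAt measurableSet_Ico,
    fun ε hε v => (hzStar v).intervalIntegral_derivWithin_le hε.1
      (Icc_subset_Ico_right hε.2)⟩
  exact continuousWithinAt_sSup_image hε.2 (hmono.mono fun δ hδ => hε.1.trans hδ.1)
    (fun δ hδ => hcpt δ ⟨hε.1.trans hδ.1, hδ.2⟩) (fun δ hδ => hne δ (hε.1.trans hδ.1))
    (continuous_apply v) (iInter_P0Veps_subset hWm_nonneg hWp_nonneg hWm_meas hWp_meas hA_meas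
      hC_meas hWp_int hε.1 hε.2)

/-- `ε ↦ z*(ε)` is componentwise non-decreasing and right-continuous on `[0,1)`; consequently
its derivative exists for Lebesgue-a.e. `ε` and `z*(ε) − z*(0) ≥ ∫₀^ε (z*)'(ξ) dξ`
componentwise. -/
theorem stmt_7
    {Ω : Type*} [MeasureSpace Ω] [IsProbabilityMeasure (volume : Measure Ω)]
    {R T : ℕ} (hR : 0 < R) (hT : 0 < T)
    (Wm Wp : Ω → Fin R → Fin T → ℝ) (S : Ω → ℝ) (C : Ω → WithTop ℕ) (A : Ω → Fin T)
    (hWm_nonneg : ∀ ω r α, 0 ≤ Wm ω r α) (hWp_nonneg : ∀ ω r α, 0 ≤ Wp ω r α)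
    (hS_nonneg : ∀ ω, 0 ≤ S ω)
    (hWm_meas : ∀ r α, Measurable fun ω => Wm ω r α)
    (hWp_meas : ∀ r α, Measurable fun ω => Wp ω r α)
    (hS_meas : Measurable S) (hA_meas : Measurable A)
    (hC_meas : ∀ l : WithTop ℕ, MeasurableSet {ω | C ω = l})
    (hWm_int : ∀ r α, Integrable fun ω => Wm ω r α)
    (hWp_int : ∀ r α, Integrable fun ω => Wp ω r α)
    (hS_int : Integrable S)
    (hζ : ∀ v : Fin R × Fin T × Fin T, 0 < zetaV Wp A v) :
    (∀ ε₁ ∈ Set.Ico (0:ℝ) 1, ∀ ε₂ ∈ Set.Ico (0:ℝ) 1, ε₁ ≤ ε₂ →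
      ∀ v, zStarVeps Wm Wp C A ε₁ v ≤ zStarVeps Wm Wp C A ε₂ v) ∧
    (∀ ε ∈ Set.Ico (0:ℝ) 1, ∀ v,
      ContinuousWithinAt (fun δ => zStarVeps Wm Wp C A δ v) (Set.Ici ε) ε) ∧
    (∀ᵐ ε ∂((volume : Measure ℝ).restrict (Set.Ico (0:ℝ) 1)), ∀ v,
      DifferentiableWithinAt ℝ (fun δ => zStarVeps Wm Wp C A δ v) (Set.Ico (0:ℝ) 1) ε) ∧
    (∀ ε ∈ Set.Ico (0:ℝ) 1, ∀ v,
      ∫ ξ in (0:ℝ)..ε, derivWithin (fun δ => zStarVeps Wm Wp C A δ v) (Set.Ico (0:ℝ) 1) ξ ≤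
        zStarVeps Wm Wp C A ε v - zStarVeps Wm Wp C A 0 v) :=
  stmt_7_general Wm Wp C A hWm_nonneg hWp_nonneg hWm_meas hWp_meas hA_meas hC_meas hWp_int
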